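/- Let D be a monotone bipartite digraph with parts V_1, V_2 (every arc goes from V_1 to V_2), with at least one arc. Then D admits a topological additive numbering and η_t(D) = max{ ⌊d(u)/d(v)⌋ + 1 : v ∈ V_2, u ∈ N(v) }, where d denotes degree in the underlying undirected graph. -/

import Mathlib

open Finset

/-- Neighborhood of `v` in the underlying undirected graph of the digraph `A`. -/
def nbr {V : Type} [Fintype V] [DecidableEq V] (A : V → V → Prop) [DecidableRel A] (v : V) :
    Finset V := Finset.univ.filter fun w => A v w ∨ A w v

/-- `S(v) = Σ_{w ∈ N(v)} f(w)`. -/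
def Svert {V : Type} [Fintype V] [DecidableEq V] (A : V → V → Prop) [DecidableRel A]
    (f : V → ℕ) (v : V) : ℕ := ∑ w ∈ nbr A v, f w

/-- `f` is a topological additive numbering: positive labels with `S(u) < S(v)` on every arc. -/
def IsTAN {V : Type} [Fintype V] [DecidableEq V] (A : V → V → Prop) [DecidableRel A]
    (f : V → ℕ) : Prop := (∀ v, 1 ≤ f v) ∧ ∀ u v, A u v → Svert A f u < Svert A f v

/-- The digraph `A` is acyclic. -/
def Acyclic {V : Type} (A : V → V → Prop) : Prop := ∀ v, ¬ Relation.TransGen A v v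

/-- The topological additive number `η_t(D)`. -/
noncomputable def etat {V : Type} [Fintype V] [DecidableEq V] (A : V → V → Prop) [DecidableRel A] : ℕ :=
  sInf {k | ∃ f, IsTAN A f ∧ ∀ v, f v ≤ k}

/-!
Along an arc `u → v`, any numbering with labels in `{1, …, k}` gives
`d(u) ≤ S(u) < S(v) ≤ k d(v)`, i.e. `⌊d(u)/d(v)⌋ < k`. In a monotone bipartite digraph this is
also sufficient: labelling `V₁` by `k` and `V₂` by `1` makes `S(u) = d(u)` on `V₁` and
`S(v) = k d(v)` on `V₂`. So `η_t(D)` is the least `k` exceeding every `⌊d(u)/d(v)⌋`.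
-/

section Digraph

variable {V : Type} [Fintype V] [DecidableEq V] {A : V → V → Prop} [DecidableRel A]

theorem mem_nbr {v w : V} : w ∈ nbr A v ↔ A v w ∨ A w v := by
  simp [nbr]

theorem card_nbr_le_svert {f : V → ℕ} (hf : ∀ v, 1 ≤ f v) (v : V) :
    (nbr A v).card ≤ Svert A f v := by
  simpa [Svert] using card_nsmul_le_sum (nbr A v) f 1 fun w _ => hf w

theorem svert_le_mul_card_nbr {f : V → ℕ} {k : ℕ} (hk : ∀ v, f v ≤ k) (v : V) :
    Svert A f v ≤ k * (nbr A v).card := by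
  simpa [Svert, mul_comm] using sum_le_card_nsmul (nbr A v) f k fun w _ => hk w

theorem card_nbr_div_card_nbr_lt {f : V → ℕ} {k : ℕ} (hf : IsTAN A f) (hk : ∀ v, f v ≤ k)
    {u v : V} (huv : A u v) : (nbr A u).card / (nbr A v).card < k := by
  have hv : 0 < (nbr A v).card := card_pos.2 ⟨u, mem_nbr.2 (Or.inr huv)⟩
  rw [Nat.div_lt_iff_lt_mul hv]
  calc (nbr A u).card ≤ Svert A f u := card_nbr_le_svert hf.1 u
    _ < Svert A f v := hf.2 u v huv
    _ ≤ k * (nbr A v).card := svert_le_mul_card_nbr hk v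

theorem etat_eq_of_isTAN {f : V → ℕ} {M : ℕ} (hf : IsTAN A f) (hfM : ∀ v, f v ≤ M)
    (hmin : ∀ g k, IsTAN A g → (∀ v, g v ≤ k) → M ≤ k) : etat A = M :=
  le_antisymm (Nat.sInf_le ⟨f, hf, hfM⟩)
    (le_csInf ⟨M, f, hf, hfM⟩ fun k ⟨g, hg, hgk⟩ => hmin g k hg hgk)

end Digraph

section MonotoneBipartite

variable {V : Type} [DecidableEq V]

structure IsMonotoneBipartite (A : V → V → Prop) (V1 V2 : Finset V) : Prop where
  disjoint : Disjoint V1 V2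
  mem_of_arc : ∀ u v, A u v → u ∈ V1 ∧ v ∈ V2

def bipartiteLabeling (V1 : Finset V) (M : ℕ) (x : V) : ℕ :=
  if x ∈ V1 then M else 1

theorem bipartiteLabeling_le (V1 : Finset V) {M : ℕ} (hM : 1 ≤ M) (x : V) :
    bipartiteLabeling V1 M x ≤ M := by
  unfold bipartiteLabeling
  split_ifs <;> omega

namespace IsMonotoneBipartite

variable [Fintype V] {A : V → V → Prop} [DecidableRel A] {V1 V2 : Finset V}

theorem arc_of_mem_nbr (hD : IsMonotoneBipartite A V1 V2) {u v : V} (hv : v ∈ V2)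
    (hu : u ∈ nbr A v) : A u v :=
  (mem_nbr.1 hu).resolve_left fun hvu =>
    disjoint_left.1 hD.disjoint (hD.mem_of_arc v u hvu).1 hv

theorem nbr_subset_left (hD : IsMonotoneBipartite A V1 V2) {v : V} (hv : v ∈ V2) :
    nbr A v ⊆ V1 :=
  fun u hu => (hD.mem_of_arc u v (hD.arc_of_mem_nbr hv hu)).1

theorem nbr_subset_right (hD : IsMonotoneBipartite A V1 V2) {u : V} (hu : u ∈ V1) :
    nbr A u ⊆ V2 := by
  intro w hw
  rcases mem_nbr.1 hw with huw | hwu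
  · exact (hD.mem_of_arc u w huw).2
  · exact absurd hu (disjoint_right.1 hD.disjoint (hD.mem_of_arc w u hwu).2)

theorem svert_bipartiteLabeling_of_mem_left (hD : IsMonotoneBipartite A V1 V2) (M : ℕ)
    {u : V} (hu : u ∈ V1) : Svert A (bipartiteLabeling V1 M) u = (nbr A u).card := by
  rw [Svert, card_eq_sum_ones]
  refine sum_congr rfl fun w hw => if_neg ?_
  exact disjoint_right.1 hD.disjoint (hD.nbr_subset_right hu hw)

theorem svert_bipartiteLabeling_of_mem_right (hD : IsMonotoneBipartite A V1 V2) (M : ℕ)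
    {v : V} (hv : v ∈ V2) : Svert A (bipartiteLabeling V1 M) v = M * (nbr A v).card := by
  rw [Svert, mul_comm, ← smul_eq_mul, ← sum_const]
  exact sum_congr rfl fun w hw => if_pos (hD.nbr_subset_left hv hw)

theorem isTAN_bipartiteLabeling (hD : IsMonotoneBipartite A V1 V2) {M : ℕ} (hM : 1 ≤ M)
    (hlt : ∀ u v, A u v → (nbr A u).card / (nbr A v).card < M) :
    IsTAN A (bipartiteLabeling V1 M) := by
  refine ⟨fun x => ?_, fun u v huv => ?_⟩
  · unfold bipartiteLabeling
    split_ifs <;> omega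
  obtain ⟨hu, hv⟩ := hD.mem_of_arc u v huv
  have hdv : 0 < (nbr A v).card := card_pos.2 ⟨u, mem_nbr.2 (Or.inr huv)⟩
  rw [hD.svert_bipartiteLabeling_of_mem_left M hu, hD.svert_bipartiteLabeling_of_mem_right M hv]
  exact (Nat.div_lt_iff_lt_mul hdv).1 (hlt u v huv)

end IsMonotoneBipartite

end MonotoneBipartite

theorem stmt_6_general {V : Type} [Fintype V] [DecidableEq V] (A : V → V → Prop) [DecidableRel A]
    (V1 V2 : Finset V) (hdisj : Disjoint V1 V2)
    (harcs : ∀ u v, A u v → u ∈ V1 ∧ v ∈ V2)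
    (hne : ∃ u v, A u v) :
    (∃ f : V → ℕ, IsTAN A f) ∧
    etat A = sSup {m : ℕ | ∃ v ∈ V2, ∃ u ∈ nbr A v,
      m = (nbr A u).card / (nbr A v).card + 1} := by
  have hD : IsMonotoneBipartite A V1 V2 := ⟨hdisj, harcs⟩
  set S := {m : ℕ | ∃ v ∈ V2, ∃ u ∈ nbr A v, m = (nbr A u).card / (nbr A v).card + 1}
  have mem_S : ∀ u v, A u v → (nbr A u).card / (nbr A v).card + 1 ∈ S :=
    fun u v huv => ⟨v, (harcs u v huv).2, u, mem_nbr.2 (Or.inr huv), rfl⟩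
  have hS : BddAbove S := by
    refine ⟨Fintype.card V + 1, ?_⟩
    rintro _ ⟨v, -, u, -, rfl⟩
    have := (Nat.div_le_self (nbr A u).card (nbr A v).card).trans (card_le_univ (nbr A u))
    omega
  have hlt : ∀ u v, A u v → (nbr A u).card / (nbr A v).card < sSup S :=
    fun u v huv => le_csSup hS (mem_S u v huv)
  obtain ⟨u, v, huv⟩ := hne
  have hM : 1 ≤ sSup S := (Nat.zero_le _).trans_lt (hlt u v huv)
  have hf := hD.isTAN_bipartiteLabeling hM hlt
  refine ⟨⟨_, hf⟩, etat_eq_of_isTAN hf (bipartiteLabeling_le V1 hM) fun g k hg hgk => ?_⟩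
  refine csSup_le ⟨_, mem_S u v huv⟩ ?_
  rintro _ ⟨w, hw, x, hx, rfl⟩
  exact card_nbr_div_card_nbr_lt hg hgk (hD.arc_of_mem_nbr hw hx)

/-- `η_t` of a monotone bipartite digraph with at least one arc. -/
theorem stmt_6 {V : Type} [Fintype V] [DecidableEq V] (A : V → V → Prop) [DecidableRel A]
    (V1 V2 : Finset V) (hdisj : Disjoint V1 V2) (hcover : V1 ∪ V2 = Finset.univ)
    (harcs : ∀ u v, A u v → u ∈ V1 ∧ v ∈ V2)
    (hbip : ∀ u v, (A u v ∨ A v u) → (u ∈ V1 ∧ v ∈ V2) ∨ (u ∈ V2 ∧ v ∈ V1))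
    (hne : ∃ u v, A u v) :
    (∃ f : V → ℕ, IsTAN A f) ∧
    etat A = sSup {m : ℕ | ∃ v ∈ V2, ∃ u ∈ nbr A v,
      m = (nbr A u).card / (nbr A v).card + 1} :=
  stmt_6_general A V1 V2 hdisj harcs hne
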